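/- arXiv:1602.06451 — 2 statements merged into one kernel-verified Lean document; each statement's English description precedes it below -/
import Mathlib

section
/- Let $W$ be a Weyl group, $x < w$, $sw < w$, $x < sx$ for a simple reflection $s = s_\alpha$, and $\beta \in S(x, sw)$, i.e. $x \le sw s_\beta < sw$. Then $\beta \in S(x,w)$, i.e. $x \le w s_\beta < w$. -/
open CoxeterSystem

variable {B W : Type*} [Group W] {M : CoxeterMatrix B}

/-- The Bruhat order on a Coxeter group: the reflexive-transitive closure of the relation
`a ⋖ a * t` where `t` is a reflection and multiplication by `t` increases length. -/
def CoxeterSystem.bruhatLE (cs : CoxeterSystem M W) : W → W → Prop :=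
  Relation.ReflTransGen (fun a b => cs.length a < cs.length b ∧ ∃ t, cs.IsReflection t ∧ b = a * t)

/-- The strict Bruhat order. -/
def CoxeterSystem.bruhatLT (cs : CoxeterSystem M W) (x y : W) : Prop :=
  cs.bruhatLE x y ∧ x ≠ y

/-- The set `S(x,w)`: under the bijection `α ↦ s_α` between positive roots and reflections,
this is `{α ∈ Φ⁺ | x ≤ w s_α < w}`. -/
def CoxeterSystem.bnSet (cs : CoxeterSystem M W) (x w : W) : Set W :=
  {t | cs.IsReflection t ∧ cs.bruhatLE x (w * t) ∧ cs.bruhatLT (w * t) w}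

/-!
Strong exchange is proved by Tits' trick. The maps `(u, ε) ↦ (s u s, ε + [u = s])` on
`W × ZMod 2` satisfy the Coxeter relations, because the left inversion sequence of the braid
relator `(s s')^m` is periodic with period `m`; so they extend to an action of `W` in which
`π ω` adds to `ε` the parity of the number of occurrences of `π ω u (π ω)⁻¹` in the left
inversion sequence of `ω`. That parity therefore depends only on `π ω`, satisfies a cocycle
identity, equals `1` at `(t, t)` for a reflection `t`, and is hence `1` exactly at the left
inversions of `π ω`.

Strong exchange for the word `s` followed by a reduced word for `s w` gives the lifting property:
if `s w < w`, `u ≤ w` and `u < s u`, then `u ≤ s w`. For the theorem put `v = s w t`, so that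
`x ≤ v < s w` and `w t = s v`: if `v < s v` then `x ≤ v ≤ s v`, and otherwise lifting gives
`x ≤ s v`; in both cases `ℓ (s v) ≤ ℓ v + 1 < ℓ w`.
-/

namespace CoxeterSystem

variable (cs : CoxeterSystem M W)

lemma conj_simple_eq_simple_iff (i : B) (u : W) :
    MulAut.conj (cs.simple i) u = cs.simple i ↔ u = cs.simple i := by
  rw [← (MulAut.conj (cs.simple i)).injective.eq_iff (b := cs.simple i)]
  simp [mul_assoc]

lemma leftInvSeq_alternatingWord_two_mul (i i' : B) (m : ℕ) :
    cs.leftInvSeq (alternatingWord i i' (2 * m)) =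
      (List.range (2 * m)).map fun k => cs.simple i * (cs.simple i' * cs.simple i) ^ k := by
  apply List.ext_getElem (by simp)
  intro k hk _
  rw [getElem_leftInvSeq_alternatingWord cs i i' m k (by simpa using hk),
    prod_alternatingWord_eq_mul_pow]
  simp only [Nat.not_even_bit1, if_false, List.getElem_map, List.getElem_range,
    show (2 * k + 1) / 2 = k by omega]

lemma prod_map_alternatingWord_two_mul {G : Type*} [Monoid G] (f : B → G) (i i' : B) (m : ℕ) :
    ((alternatingWord i i' (2 * m)).map f).prod = (f i * f i') ^ m := by
  induction m with
  | zero => simp [alternatingWord]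
  | succ m ih =>
    rw [show 2 * (m + 1) = 2 * m + 1 + 1 by ring, alternatingWord_succ', alternatingWord_succ',
      if_neg (by simp [parity_simps]), if_pos (by simp)]
    simp [ih, pow_succ', mul_assoc]

section ParityRepresentation

variable [DecidableEq W]

lemma even_count_leftInvSeq_alternatingWord_two_mul_M (i i' : B) (t : W) :
    Even ((cs.leftInvSeq (alternatingWord i i' (2 * M i i'))).count t) := by
  rw [leftInvSeq_alternatingWord_two_mul, two_mul, List.range_add, List.map_append, List.map_map,
    List.count_append]
  have hperiodic : ((fun k => cs.simple i * (cs.simple i' * cs.simple i) ^ k) ∘ (M i i' + ·)) =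
      fun k => cs.simple i * (cs.simple i' * cs.simple i) ^ k := by
    ext k
    simp [pow_add]
  rw [hperiodic]
  exact ⟨_, rfl⟩

def parityPerm (i : B) : Equiv.Perm (W × ZMod 2) :=
  Equiv.prodShear (MulAut.conj (cs.simple i)).toEquiv
    (fun u => Equiv.addRight (if u = cs.simple i then 1 else 0))

lemma prod_map_parityPerm_apply (ω : List B) (t : W) (ε : ZMod 2) :
    (ω.map cs.parityPerm).prod (t, ε) =
      (MulAut.conj (cs.wordProd ω) t,
        ε + ((cs.leftInvSeq ω).count (MulAut.conj (cs.wordProd ω) t) : ZMod 2)) := by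
  induction ω with
  | nil => simp
  | cons j ω ih =>
    rw [List.map_cons, List.prod_cons, Equiv.Perm.mul_apply, ih]
    simp only [parityPerm, Equiv.prodShear_apply, wordProd_cons, map_mul, MulAut.mul_apply,
      leftInvSeq, List.count_cons, List.count_map_of_injective _ _ (MulAut.conj _).injective]
    simp only [beq_iff_eq, eq_comm (a := cs.simple j), conj_simple_eq_simple_iff]
    split_ifs <;> simp [add_assoc]

lemma isLiftable_parityPerm : M.IsLiftable cs.parityPerm := by
  intro i i'
  have hword := cs.prod_map_parityPerm_apply (alternatingWord i i' (2 * M i i'))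
  have hprod : cs.wordProd (alternatingWord i i' (2 * M i i')) = 1 := by
    rw [prod_alternatingWord_eq_mul_pow]
    simp
  ext ⟨t, ε⟩ : 1
  rw [← prod_map_alternatingWord_two_mul, hword, hprod]
  obtain ⟨c, hc⟩ := cs.even_count_leftInvSeq_alternatingWord_two_mul_M i i' t
  simp [hc, CharTwo.add_self_eq_zero]

def parityRep : W →* Equiv.Perm (W × ZMod 2) :=
  cs.lift ⟨cs.parityPerm, cs.isLiftable_parityPerm⟩

lemma parityRep_wordProd (ω : List B) :
    cs.parityRep (cs.wordProd ω) = (ω.map cs.parityPerm).prod := by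
  rw [wordProd, map_list_prod, List.map_map]
  congr 1
  exact List.map_congr_left fun j _ => cs.lift_apply_simple cs.isLiftable_parityPerm j

def leftInvParity (w t : W) : ZMod 2 := (cs.parityRep w (w⁻¹ * t * w, 0)).2

lemma leftInvParity_wordProd (ω : List B) (t : W) :
    cs.leftInvParity (cs.wordProd ω) t = (cs.leftInvSeq ω).count t := by
  simp [leftInvParity, parityRep_wordProd, prod_map_parityPerm_apply, mul_assoc]

lemma parityRep_apply (w u : W) (ε : ZMod 2) :
    cs.parityRep w (u, ε) = (MulAut.conj w u, ε + cs.leftInvParity w (MulAut.conj w u)) := by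
  obtain ⟨ω, rfl⟩ := cs.wordProd_surjective w
  simp [leftInvParity_wordProd, parityRep_wordProd, prod_map_parityPerm_apply]

lemma leftInvParity_mul (u v t : W) :
    cs.leftInvParity (u * v) t = cs.leftInvParity u t + cs.leftInvParity v (u⁻¹ * t * u) := by
  conv_lhs => rw [leftInvParity, map_mul, Equiv.Perm.mul_apply, parityRep_apply, parityRep_apply]
  simp [mul_assoc, add_comm]

lemma leftInvParity_one (t : W) : cs.leftInvParity 1 t = 0 := by
  simpa using cs.leftInvParity_wordProd [] t

lemma leftInvParity_simple_self (i : B) : cs.leftInvParity (cs.simple i) (cs.simple i) = 1 := by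
  simpa using cs.leftInvParity_wordProd [i] (cs.simple i)

lemma leftInvParity_self {t : W} (ht : cs.IsReflection t) : cs.leftInvParity t t = 1 := by
  obtain ⟨u, i, rfl⟩ := ht
  -- `leftInvParity u t` and `leftInvParity u⁻¹ (s i)` cancel: by `h3` their sum is `0`.
  have h1 := cs.leftInvParity_mul u (cs.simple i * u⁻¹) (u * cs.simple i * u⁻¹)
  have h2 := cs.leftInvParity_mul (cs.simple i) u⁻¹ (cs.simple i)
  have h3 := cs.leftInvParity_mul u u⁻¹ (u * cs.simple i * u⁻¹)
  simp only [mul_assoc, inv_mul_cancel_left, inv_mul_cancel, mul_inv_cancel, mul_one, inv_simple,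
    simple_mul_simple_cancel_left, leftInvParity_simple_self, leftInvParity_one] at h1 h2 h3
  rw [mul_assoc, h1, h2]
  linear_combination -h3

lemma leftInvParity_eq_one_iff {w t : W} : cs.leftInvParity w t = 1 ↔ cs.IsLeftInversion w t := by
  have isLeftInversion_of_eq_one {w : W} (h : cs.leftInvParity w t = 1) :
      cs.IsLeftInversion w t := by
    obtain ⟨ω, hω, rfl⟩ := cs.exists_isReduced w
    refine cs.isLeftInversion_of_mem_leftInvSeq hω (List.count_pos_iff.mp (Nat.pos_of_ne_zero ?_))
    intro h0
    simp [leftInvParity_wordProd, h0] at h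
  refine ⟨isLeftInversion_of_eq_one, fun ⟨ht, hlt⟩ => ?_⟩
  by_contra hne
  have h0 : cs.leftInvParity w t = 0 := by
    generalize cs.leftInvParity w t = z at hne
    decide +revert
  have hup : cs.leftInvParity (t * w) t = 1 := by
    rw [leftInvParity_mul, cs.leftInvParity_self ht, ht.inv, ht.mul_self, one_mul, h0, add_zero]
  have := (isLeftInversion_of_eq_one hup).2
  rw [← mul_assoc, ht.mul_self, one_mul] at this
  omega

end ParityRepresentation

theorem mem_leftInvSeq_of_isLeftInversion {ω : List B} {t : W}
    (h : cs.IsLeftInversion (cs.wordProd ω) t) : t ∈ cs.leftInvSeq ω := by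
  classical
  have hparity := cs.leftInvParity_eq_one_iff.mpr h
  rw [leftInvParity_wordProd] at hparity
  refine List.count_pos_iff.mp (Nat.pos_of_ne_zero fun h0 => ?_)
  simp [h0] at hparity

lemma mul_eq_simple_mul_of_length_simple_mul_lt {w t : W} {i : B} (ht : cs.IsRightInversion w t)
    (h : cs.length (cs.simple i * w) < cs.length (cs.simple i * (w * t))) :
    w * t = cs.simple i * w := by
  obtain ⟨ω, hω, hsw⟩ := cs.exists_isReduced (cs.simple i * w)
  have hw : w = cs.wordProd (i :: ω) := by
    rw [wordProd_cons, ← hsw, simple_mul_simple_cancel_left]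
  have hleft : cs.IsLeftInversion (cs.wordProd (i :: ω)) (w * t * w⁻¹) :=
    hw ▸ ⟨ht.1.conj w, by simpa [mul_assoc] using ht.2⟩
  obtain ⟨k, hk, hkt⟩ := List.mem_iff_getElem.mp (cs.mem_leftInvSeq_of_isLeftInversion hleft)
  have herase := cs.getD_leftInvSeq_mul_wordProd (i :: ω) k
  rw [List.getD_eq_getElem _ _ hk, hkt, ← hw, inv_mul_cancel_right] at herase
  rcases k with _ | k
  · simpa [hsw] using herase
  · rw [List.eraseIdx_cons_succ, wordProd_cons] at herase
    rw [herase, simple_mul_simple_cancel_left, hsw, hω.eq] at h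
    have := cs.length_wordProd_le (ω.eraseIdx k)
    have := List.length_eraseIdx_add_one (l := ω) (i := k) (by simpa using hk)
    omega

lemma length_le_of_bruhatLE {u v : W} (h : cs.bruhatLE u v) : cs.length u ≤ cs.length v := by
  induction h with
  | refl => rfl
  | tail _ hstep ih => exact ih.trans hstep.1.le

lemma length_lt_of_bruhatLT {u v : W} (h : cs.bruhatLT u v) : cs.length u < cs.length v := by
  obtain ⟨hle, hne⟩ := h
  rcases Relation.ReflTransGen.cases_head hle with rfl | ⟨c, hstep, hle'⟩
  · exact absurd rfl hne
  · exact hstep.1.trans_le (cs.length_le_of_bruhatLE hle')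

lemma bruhatLE_mul_of_length_lt {w t : W} (ht : cs.IsReflection t)
    (h : cs.length w < cs.length (w * t)) : cs.bruhatLE w (w * t) :=
  .single ⟨h, t, ht, rfl⟩

lemma bruhatLE_simple_mul_of_length_lt {w : W} {i : B}
    (h : cs.length w < cs.length (cs.simple i * w)) : cs.bruhatLE w (cs.simple i * w) := by
  have hconj : cs.simple i * w = w * (w⁻¹ * cs.simple i * w) := by group
  rw [hconj] at h ⊢
  exact cs.bruhatLE_mul_of_length_lt (by simpa using (cs.isReflection_simple i).conj w⁻¹) h

lemma bruhatLT_mul_of_isRightInversion {w t : W} (h : cs.IsRightInversion w t) :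
    cs.bruhatLT (w * t) w := by
  refine ⟨.single ⟨h.2, t, h.1, by rw [mul_assoc, h.1.mul_self, mul_one]⟩, fun heq => ?_⟩
  exact (heq ▸ h.2).false

theorem bruhatLE_simple_mul_of_bruhatLE {u w : W} {i : B}
    (hu : cs.length u < cs.length (cs.simple i * u))
    (hw : cs.length (cs.simple i * w) < cs.length w) (huw : cs.bruhatLE u w) :
    cs.bruhatLE u (cs.simple i * w) := by
  induction huw with
  | refl => omega
  | @tail x w hux hxw ih =>
    obtain ⟨hlen, t, ht, rfl⟩ := hxw
    have hsx := cs.length_simple_mul x i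
    have hsw := cs.length_simple_mul (x * t) i
    rw [← mul_assoc] at hsw ⊢
    by_cases hlt : cs.length (cs.simple i * x) < cs.length (cs.simple i * x * t)
    · have hu_sx : cs.bruhatLE u (cs.simple i * x) := by
        rcases hsx with hup | hdown
        · exact hux.trans (cs.bruhatLE_simple_mul_of_length_lt (by omega))
        · exact ih (by omega)
      exact hu_sx.trans (cs.bruhatLE_mul_of_length_lt ht hlt)
    · have hne := ht.length_mul_left_ne (cs.simple i * x)
      have hxt : cs.IsRightInversion (x * t) t :=
        ht.isRightInversion_mul_left_iff.mpr fun h => h.2.not_gt hlen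
      have hx : x = cs.simple i * (x * t) := by
        have := cs.mul_eq_simple_mul_of_length_simple_mul_lt hxt (i := i)
          (by rw [mul_assoc x, ht.mul_self, mul_one, ← mul_assoc]; omega)
        rwa [mul_assoc, ht.mul_self, mul_one] at this
      rw [mul_assoc, ← hx]
      exact hux

end CoxeterSystem

theorem mem_bnSet_of_mem_bnSet_smul_general (cs : CoxeterSystem M W) (i : B) (x w t : W)
    (hsw : cs.bruhatLT (cs.simple i * w) w)
    (hsx : cs.bruhatLT x (cs.simple i * x))
    (ht : t ∈ cs.bnSet x (cs.simple i * w)) :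
    t ∈ cs.bnSet x w := by
  obtain ⟨hrefl, hxv, hv⟩ := ht
  set v := cs.simple i * w * t
  have hwt : w * t = cs.simple i * v := by simp [v, mul_assoc]
  have hlv := cs.length_lt_of_bruhatLT hv
  have hlw := cs.length_lt_of_bruhatLT hsw
  have hsv := cs.length_simple_mul v i
  have hx_sv : cs.bruhatLE x (cs.simple i * v) := by
    rcases hsv with hup | hdown
    · exact hxv.trans (cs.bruhatLE_simple_mul_of_length_lt (by omega))
    · exact cs.bruhatLE_simple_mul_of_bruhatLE (cs.length_lt_of_bruhatLT hsx) (by omega) hxv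
  refine ⟨hrefl, hwt ▸ hx_sv, cs.bruhatLT_mul_of_isRightInversion ⟨hrefl, ?_⟩⟩
  rw [hwt]
  omega

/-- If `x < w`, `sw < w`, `x < sx` for a simple reflection `s`, and `β ∈ S(x, sw)`
(i.e. `x ≤ sw s_β < sw`), then `β ∈ S(x, w)` (i.e. `x ≤ w s_β < w`). -/
theorem mem_bnSet_of_mem_bnSet_smul (cs : CoxeterSystem M W) (i : B) (x w t : W)
    (hxw : cs.bruhatLT x w)
    (hsw : cs.bruhatLT (cs.simple i * w) w)
    (hsx : cs.bruhatLT x (cs.simple i * x))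
    (ht : t ∈ cs.bnSet x (cs.simple i * w)) :
    t ∈ cs.bnSet x w :=
  mem_bnSet_of_mem_bnSet_smul_general cs i x w t hsw hsx ht
end

section
/- Let $W$ be a Weyl group, $\mathfrak{w} = s_1\cdots s_n$ a good word of $w$ for $x$ with $\lambda_{x,\mathfrak{w}} = (i_1,\ldots,i_d)$ and $i_1 > 1$. Then $S(s_1 x, s_1 w) = S(x,w)$, where $S(y,z) = \{\alpha \in \Phi^+ \mid y \le z s_\alpha < z\}$. -/
open CoxeterSystem

variable {B W : Type*} [Group W] {M : CoxeterMatrix B}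

/-- Delete from the word `ω` the letters at the (0-based) positions in `S`. -/
def delIdxs {B : Type*} (ω : List B) (S : List ℕ) : List B :=
  (((List.range ω.length).zip ω).filter (fun p => decide (p.1 ∉ S))).map Prod.snd

open Classical in
/-- `λ_{x,ω}`: the increasing list of (0-based) positions `i` such that
`x ≤ s_1 ⋯ ŝ_i ⋯ s_n` (the word with the letter at position `i` omitted). -/
noncomputable def CoxeterSystem.lambdaList (cs : CoxeterSystem M W) (x : W) (ω : List B) :
    List ℕ :=
  (List.range ω.length).filter
    (fun i => decide (cs.bruhatLE x (cs.wordProd (ω.eraseIdx i))))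

/-- `y` covers `x` in Bruhat order. -/
def CoxeterSystem.covers (cs : CoxeterSystem M W) (y x : W) : Prop :=
  cs.bruhatLT x y ∧ cs.length y = cs.length x + 1

/-- `L` is the label of a maximal chain `w = w_0 → w_1 → ⋯ → w_d = x` of the Bruhat interval
`[x, w]` with respect to the reduced word `ω` of `w`: `L` records the (0-based) positions
deleted at each covering step, `w_k` being obtained from `ω` by deleting the positions
`L.take k`. -/
def CoxeterSystem.IsMaxChainLabel (cs : CoxeterSystem M W) (ω : List B) (x : W)
    (L : List ℕ) : Prop :=
  L.Nodup ∧ (∀ i ∈ L, i < ω.length) ∧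
    (∀ k < L.length, cs.covers (cs.wordProd (delIdxs ω (L.take k)))
      (cs.wordProd (delIdxs ω (L.take (k + 1))))) ∧
    cs.wordProd (delIdxs ω L) = x

/-!
Write `s = s_1`. Deleting position `0` from `ω` leaves a word for `s w`, so `0 ∉ λ_{x,ω}` says
exactly that `x ≰ s w`; together with `x ≤ w` this forces `s` to be a left descent of both `w`
and `x`. By the lifting property of the Bruhat order (if `u ≤ v` and `s v < v`, then `s u ≤ v`,
and moreover `s u ≤ s v` if `s u < u`, while `u ≤ s v` if `u < s u`), for a reflection `t` the
conditions `s x ≤ s w t ≤ s w` and `x ≤ w t ≤ w` are equivalent when `s` is a left descent of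
`w t`; otherwise each of them would give `x ≤ s w`.

The lifting property rests on the strong exchange property, which comes from Tits' parity
representation `s_i ↦ ((t, z) ↦ (s_i t s_i, z + [t = s_i]))` of `W` on `W × ℤ/2`.
-/

namespace CoxeterSystem

variable (cs : CoxeterSystem M W)

local prefix:100 "s " => cs.simple
local prefix:100 "π " => cs.wordProd
local prefix:100 "ℓ " => cs.length
local prefix:100 "ris " => cs.rightInvSeq

section InversionParity

open scoped Classical

noncomputable def inversionParityPerm (i : B) : Equiv.Perm (W × ZMod 2) :=
  Function.Involutive.toPerm (fun p ↦ (s i * p.1 * s i, p.2 + if p.1 = s i then 1 else 0)) <| by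
    rintro ⟨t, z⟩
    have hconj : s i * t * s i = s i ↔ t = s i := by
      constructor <;> intro h
      · simpa [mul_assoc] using congrArg (fun u ↦ s i * u * s i) h
      · simp [h]
    simp only [hconj, Prod.mk.injEq, add_assoc, CharTwo.add_self_eq_zero, add_zero, and_true]
    simp [mul_assoc]

lemma inversionParityPerm_apply (i : B) (t : W) (z : ZMod 2) :
    cs.inversionParityPerm i (t, z) = (s i * t * s i, z + if t = s i then 1 else 0) := rfl

private lemma conj_eq_iff {a b t : W} : a * t * a⁻¹ = b ↔ t = a⁻¹ * b * a := by
  constructor <;> rintro rfl <;> group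

lemma simple_mul_pow_mul_simple (i j : B) (k : ℕ) :
    s j * (s i * s j) ^ k * s j = ((s i * s j) ^ k)⁻¹ := by
  have h := conj_pow (a := s j) (b := s i * s j) (i := k)
  rw [inv_simple] at h
  rw [← h, ← inv_pow, mul_inv_rev, inv_simple, inv_simple, mul_assoc, mul_assoc,
    simple_mul_simple_self, mul_one]

lemma inversionParityPerm_mul_pow_apply (i j : B) (m : ℕ) (t : W) (z : ZMod 2) :
    ((cs.inversionParityPerm i * cs.inversionParityPerm j) ^ m) (t, z) =
      ((s i * s j) ^ m * t * ((s i * s j) ^ m)⁻¹,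
        z + ∑ r ∈ Finset.range (2 * m), if t = s j * (s i * s j) ^ r then 1 else 0) := by
  set c := s i * s j
  have hc : ∀ k, (c ^ k)⁻¹ * s j = s j * c ^ k := fun k ↦ by
    rw [← cs.simple_mul_pow_mul_simple i j k, simple_mul_simple_cancel_right]
  induction m generalizing z with
  | zero => simp
  | succ m ih =>
    have h1 : c ^ m * t * (c ^ m)⁻¹ = s j ↔ t = s j * c ^ (2 * m) := by
      rw [conj_eq_iff, hc, mul_assoc, ← pow_add, two_mul]
    have h2 : s j * (c ^ m * t * (c ^ m)⁻¹) * s j = s i ↔ t = s j * c ^ (2 * m + 1) := by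
      have e : s j * (c ^ m * t * (c ^ m)⁻¹) * s j = (s j * c ^ m) * t * (s j * c ^ m)⁻¹ := by
        simp [mul_assoc]
      rw [e, conj_eq_iff, mul_inv_rev, inv_simple, hc, mul_assoc, ← mul_assoc (s i), ← pow_succ',
        mul_assoc, ← pow_add, show m + (m + 1) = 2 * m + 1 by ring]
    rw [pow_succ', Equiv.Perm.mul_apply, ih, Equiv.Perm.mul_apply, inversionParityPerm_apply,
      inversionParityPerm_apply, h1, h2, mul_add, Finset.sum_range_succ, Finset.sum_range_succ]
    refine Prod.ext ?_ ?_
    · simp only [pow_succ', mul_inv_rev, c, inv_simple, mul_assoc]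
    · dsimp only
      ring

lemma isLiftable_inversionParityPerm : M.IsLiftable cs.inversionParityPerm := by
  intro i j
  ext ⟨t, z⟩ : 1
  have hper : ∀ r, (s i * s j) ^ (M i j + r) = (s i * s j) ^ r := fun r ↦ by
    rw [pow_add, simple_mul_simple_pow, one_mul]
  rw [inversionParityPerm_mul_pow_apply, two_mul, Finset.sum_range_add]
  simp only [hper, simple_mul_simple_pow, CharTwo.add_self_eq_zero]
  simp

noncomputable def inversionParityRep : W →* Equiv.Perm (W × ZMod 2) :=
  cs.lift ⟨cs.inversionParityPerm, cs.isLiftable_inversionParityPerm⟩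

lemma inversionParityRep_wordProd_apply (ω : List B) (t : W) (z : ZMod 2) :
    cs.inversionParityRep (π ω) (t, z) = (π ω * t * (π ω)⁻¹, z + (ris ω).count t) := by
  induction ω generalizing z with
  | nil => simp
  | cons i ω ih =>
    have hcond : π ω * t * (π ω)⁻¹ = s i ↔ (π ω)⁻¹ * s i * π ω = t := by
      rw [conj_eq_iff, eq_comm]
    rw [wordProd_cons, map_mul, Equiv.Perm.mul_apply, ih, inversionParityRep,
      lift_apply_simple, inversionParityPerm_apply, hcond, rightInvSeq, List.count_cons]
    refine Prod.ext ?_ ?_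
    · simp only [mul_inv_rev, inv_simple, mul_assoc]
    · simp only [beq_iff_eq]
      push_cast
      ring

noncomputable def inversionParity (w t : W) : ZMod 2 := (cs.inversionParityRep w (t, 0)).2

lemma inversionParity_wordProd (ω : List B) (t : W) :
    cs.inversionParity (π ω) t = (ris ω).count t := by
  simp [inversionParity, inversionParityRep_wordProd_apply]

lemma inversionParityRep_apply (w t : W) (z : ZMod 2) :
    cs.inversionParityRep w (t, z) = (w * t * w⁻¹, z + cs.inversionParity w t) := by
  obtain ⟨ω, rfl⟩ := cs.wordProd_surjective w
  rw [inversionParityRep_wordProd_apply, inversionParity_wordProd]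

lemma inversionParity_mul (u v t : W) :
    cs.inversionParity (u * v) t = cs.inversionParity v t + cs.inversionParity u (v * t * v⁻¹) := by
  rw [inversionParity, map_mul, Equiv.Perm.mul_apply, inversionParityRep_apply,
    inversionParityRep_apply, zero_add]

lemma inversionParity_self {t : W} (ht : cs.IsReflection t) : cs.inversionParity t t = 1 := by
  obtain ⟨u, i, rfl⟩ := ht
  set t := u * s i * u⁻¹
  have hconj : u⁻¹ * t * u⁻¹⁻¹ = s i := by simp [t, mul_assoc]
  have h_one : cs.inversionParity (u * u⁻¹) t = 0 := by simp [inversionParity]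
  have h_simple : cs.inversionParity (s i) (s i) = 1 := by
    simpa using cs.inversionParity_wordProd [i] (s i)
  rw [inversionParity_mul, hconj] at h_one
  rw [inversionParity_mul, inversionParity_mul, hconj, h_simple, mul_inv_cancel_right]
  linear_combination h_one

lemma mem_rightInvSeq_of_inversionParity_eq_one {ω : List B} {t : W}
    (h : cs.inversionParity (π ω) t = 1) : t ∈ ris ω := by
  rw [inversionParity_wordProd] at h
  by_contra hnot
  rw [List.count_eq_zero_of_not_mem hnot, Nat.cast_zero] at h
  exact zero_ne_one h

theorem inversionParity_eq_one_iff {w t : W} :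
    cs.inversionParity w t = 1 ↔ cs.IsRightInversion w t := by
  have forward : ∀ {w : W}, cs.inversionParity w t = 1 → cs.IsRightInversion w t := by
    intro w h
    obtain ⟨ω, hω, rfl⟩ := cs.exists_isReduced w
    exact cs.isRightInversion_of_mem_rightInvSeq hω (cs.mem_rightInvSeq_of_inversionParity_eq_one h)
  refine ⟨forward, fun ⟨ht, hlt⟩ ↦ ?_⟩
  by_contra hne
  have h0 : cs.inversionParity w t = 0 := by
    generalize cs.inversionParity w t = a at hne
    revert a
    decide
  have hwt : cs.inversionParity (w * t) t = 1 := by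
    rw [inversionParity_mul, mul_inv_cancel_right, h0, inversionParity_self cs ht, add_zero]
  have := (forward hwt).2
  rw [mul_assoc, ht.mul_self, mul_one] at this
  exact absurd hlt this.not_gt

theorem exists_wordProd_eraseIdx_eq_mul (ω : List B) {t : W}
    (h : cs.IsRightInversion (π ω) t) : ∃ j < ω.length, π (ω.eraseIdx j) = π ω * t := by
  obtain ⟨j, hj, rfl⟩ := List.mem_iff_getElem.mp
    (cs.mem_rightInvSeq_of_inversionParity_eq_one ((cs.inversionParity_eq_one_iff).mpr h))
  rw [length_rightInvSeq] at hj
  exact ⟨j, hj, by rw [← List.getD_eq_getElem _ 1, wordProd_mul_getD_rightInvSeq]⟩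

end InversionParity

section Bruhat

variable {cs}

lemma bruhatLE.trans {u v w : W} (h₁ : cs.bruhatLE u v) (h₂ : cs.bruhatLE v w) :
    cs.bruhatLE u w :=
  Relation.ReflTransGen.trans h₁ h₂

lemma bruhatLE_of_mul_eq {u v t : W} (ht : cs.IsReflection t) (hv : u * t = v)
    (h : ℓ u < ℓ v) : cs.bruhatLE u v :=
  Relation.ReflTransGen.single ⟨h, t, ht, hv.symm⟩

lemma bruhatLE_simple_mul_self {w : W} {i : B} (h : ¬cs.IsLeftDescent w i) :
    cs.bruhatLE w (s i * w) :=
  bruhatLE_of_mul_eq (t := w⁻¹ * s i * w) (by simpa using (cs.isReflection_simple i).conj w⁻¹)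
    (by group) (by rw [cs.not_isLeftDescent_iff.mp h]; omega)

lemma simple_mul_bruhatLE_self {w : W} {i : B} (h : cs.IsLeftDescent w i) :
    cs.bruhatLE (s i * w) w := by
  simpa using bruhatLE_simple_mul_self (cs.isLeftDescent_iff_not_isLeftDescent_mul.mp h)

lemma mem_bnSet_iff {x w t : W} :
    t ∈ cs.bnSet x w ↔
      cs.IsReflection t ∧ cs.bruhatLE x (w * t) ∧ cs.bruhatLE (w * t) w := by
  refine and_congr_right fun ht ↦ and_congr_right fun _ ↦ ?_
  exact ⟨And.left, fun h ↦ ⟨h, fun heq ↦ ht.length_mul_left_ne w (congrArg cs.length heq)⟩⟩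

lemma eq_simple_mul_or_length_simple_mul_lt {v t : W} (ht : cs.IsReflection t)
    (hlt : ℓ v < ℓ (v * t)) (i : B) :
    v = s i * (v * t) ∨ ℓ (s i * v) < ℓ (s i * (v * t)) := by
  obtain ⟨τ, hτ, hτeq⟩ := cs.exists_isReduced (s i * (v * t))
  have hword : π (i :: τ) = v * t := by
    rw [wordProd_cons, ← hτeq, simple_mul_simple_cancel_left]
  have hvtt : v * t * t = v := by rw [mul_assoc, ht.mul_self, mul_one]
  obtain ⟨j, hj, hjeq⟩ := cs.exists_wordProd_eraseIdx_eq_mul (i :: τ) (t := t)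
    ⟨ht, by rwa [hword, hvtt]⟩
  rw [hword, hvtt] at hjeq
  cases j with
  | zero => exact .inl (hjeq.symm.trans (by rw [List.eraseIdx_cons_zero, hτeq]))
  | succ k =>
    refine .inr ?_
    rw [List.eraseIdx_cons_succ, wordProd_cons] at hjeq
    rw [hτeq, hτ.eq, ← hjeq, simple_mul_simple_cancel_left]
    calc ℓ (π (τ.eraseIdx k)) ≤ (τ.eraseIdx k).length := cs.length_wordProd_le _
      _ < τ.length := by
        rw [List.length_cons] at hj
        rw [List.length_eraseIdx_of_lt (by omega)]
        omega

theorem bruhatLE_simple_mul {u v : W} {i : B} (hv : cs.IsLeftDescent v i)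
    (h : cs.bruhatLE u v) (hu : ¬cs.IsLeftDescent u i) : cs.bruhatLE u (s i * v) := by
  induction h with
  | refl => exact absurd hv hu
  | @tail v' v h' step ih =>
    obtain ⟨hlt, t, ht, rfl⟩ := step
    rcases eq_simple_mul_or_length_simple_mul_lt ht hlt i with heq | hlt'
    · exact heq ▸ h'
    have hle : cs.bruhatLE (s i * v') (s i * (v' * t)) :=
      bruhatLE_of_mul_eq ht (mul_assoc _ _ _) hlt'
    by_cases hd : cs.IsLeftDescent v' i
    · exact (ih hd).trans hle
    · exact (h'.trans (bruhatLE_simple_mul_self hd)).trans hle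

theorem simple_mul_bruhatLE_simple_mul {u v : W} {i : B} (hv : cs.IsLeftDescent v i)
    (h : cs.bruhatLE u v) (hu : cs.IsLeftDescent u i) : cs.bruhatLE (s i * u) (s i * v) :=
  bruhatLE_simple_mul hv ((simple_mul_bruhatLE_self hu).trans h)
    (cs.isLeftDescent_iff_not_isLeftDescent_mul.mp hu)

theorem simple_mul_bruhatLE {u v : W} {i : B} (hv : cs.IsLeftDescent v i)
    (h : cs.bruhatLE u v) : cs.bruhatLE (s i * u) v := by
  induction h using Relation.ReflTransGen.head_induction_on with
  | refl => exact simple_mul_bruhatLE_self hv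
  | @head u u' step h' ih =>
    obtain ⟨hlt, t, ht, rfl⟩ := step
    rcases eq_simple_mul_or_length_simple_mul_lt ht hlt i with heq | hlt'
    · rw [heq, simple_mul_simple_cancel_left]
      exact h'
    · exact (bruhatLE_of_mul_eq ht (mul_assoc _ _ _) hlt').trans ih

theorem simple_mul_bruhatLE_simple_mul_iff {u v : W} {i : B} (hu : cs.IsLeftDescent u i)
    (hv : cs.IsLeftDescent v i) : cs.bruhatLE (s i * u) (s i * v) ↔ cs.bruhatLE u v := by
  refine ⟨fun h ↦ ?_, fun h ↦ simple_mul_bruhatLE_simple_mul hv h hu⟩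
  simpa using simple_mul_bruhatLE hv (h.trans (simple_mul_bruhatLE_self hv))

theorem bnSet_simple_mul {x w : W} {i : B} (hxw : cs.bruhatLE x w)
    (hx : ¬cs.bruhatLE x (s i * w)) : cs.bnSet (s i * x) (s i * w) = cs.bnSet x w := by
  have hw : cs.IsLeftDescent w i := by_contra fun h ↦ hx (hxw.trans (bruhatLE_simple_mul_self h))
  have hxd : cs.IsLeftDescent x i := by_contra fun h ↦ hx (bruhatLE_simple_mul hw hxw h)
  ext t
  simp only [mem_bnSet_iff, mul_assoc]
  by_cases hd : cs.IsLeftDescent (w * t) i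
  · rw [simple_mul_bruhatLE_simple_mul_iff hxd hd, simple_mul_bruhatLE_simple_mul_iff hd hw]
  refine iff_of_false (fun ⟨_, hxt, hwt⟩ ↦ hx ?_) (fun ⟨_, hxt, hwt⟩ ↦ hx ?_)
  · have hsd : cs.IsLeftDescent (s i * (w * t)) i := by
      rwa [isLeftDescent_iff_not_isLeftDescent_mul, simple_mul_simple_cancel_left]
    simpa using (simple_mul_bruhatLE hsd hxt).trans hwt
  · exact hxt.trans (bruhatLE_simple_mul hw hwt hd)

end Bruhat

end CoxeterSystem

theorem good_word_bnSet_eq_general (cs : CoxeterSystem M W) (ω : List B) (w x : W)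
    (hne : ω ≠ [])
    (hw : cs.wordProd ω = w) (hxw : cs.bruhatLE x w)
    (h1 : 0 ∉ cs.lambdaList x ω) :
    cs.bnSet (cs.simple (ω.head hne) * x) (cs.simple (ω.head hne) * w) = cs.bnSet x w := by
  refine cs.bnSet_simple_mul hxw fun hle ↦ h1 ?_
  simp only [lambdaList, List.mem_filter, List.mem_range, decide_eq_true_eq]
  refine ⟨List.length_pos_iff.mpr hne, ?_⟩
  obtain ⟨i, τ, rfl⟩ := List.exists_cons_of_ne_nil hne
  simpa [← hw, wordProd_cons] using hle

/-- If `ω = s_1 ⋯ s_n` is a good word of `w` for `x` with `λ_{x,ω} = (i_1, …, i_d)` and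
`i_1 > 1` (0-based: `0 ∉ λ_{x,ω}`), then `S(s_1 x, s_1 w) = S(x, w)`. -/
theorem good_word_bnSet_eq (cs : CoxeterSystem M W) (ω : List B) (w x : W)
    (hne : ω ≠ [])
    (hred : cs.IsReduced ω) (hw : cs.wordProd ω = w) (hxw : cs.bruhatLE x w)
    (hgood : cs.wordProd (delIdxs ω (cs.lambdaList x ω)) = x)
    (h1 : 0 ∉ cs.lambdaList x ω) :
    cs.bnSet (cs.simple (ω.head hne) * x) (cs.simple (ω.head hne) * w) = cs.bnSet x w :=
  good_word_bnSet_eq_general cs ω w x hne hw hxw h1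
end
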